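/- In the dependent CRM, conditional on R and N_t the individual severities Y_{t,j} have mean λ₂R₂e^{β₀N_t}; with N_t | R ~ Poisson(λ₁R₁), E[R₂] = 1, Var[R₂] = b₂, R₂ ⟂ (R₁, N_t). Then for claims in the same period, Cov[Y_{t,j₁}, Y_{t,j₂}] = λ₂²[(1 + b₂) M(ζ₂) − (M(ζ₁))²], where ζ₁ = λ₁(e^{β₀} − 1), ζ₂ = λ₁(e^{2β₀} − 1), and M is the mgf of R₁. -/

import Mathlib

open MeasureTheory Real ProbabilityTheory
open scoped ENNReal Nat

/-!
Condition on `σ(N, R₁, R₂)`: there `Y₁` and `Y₂` have mean `l₂ R₂ e^{β₀ N}` and, being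
conditionally independent, `Y₁ Y₂` has mean `l₂² R₂² e^{2 β₀ N}`. Since `R₂ ⟂ (R₁, N)`, the
expectations factor as `E[R₂ⁿ] E[e^{cN}]`, with `E[R₂] = 1` and `E[R₂²] = 1 + b₂`. Mixing the
Poisson identity `∑ₖ e^{ck} e^{-t} tᵏ / k! = e^{(e^c - 1) t}` over `t = l₁ R₁` gives
`E[e^{cN}] = M(l₁ (e^c - 1))`, to be used with `c = β₀` and `c = 2 β₀`.
-/

theorem hasSum_exp_mul_mul_poisson (c t : ℝ) :
    HasSum (fun k : ℕ => exp (c * k) * (exp (-t) * t ^ k / k !)) (exp ((exp c - 1) * t)) := by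
  have h := (NormedSpace.expSeries_div_hasSum_exp (t * exp c)).mul_left (exp (-t))
  rw [← exp_eq_exp_ℝ, ← exp_add, show -t + t * exp c = (exp c - 1) * t by ring] at h
  have hterm (k : ℕ) :
      exp (c * k) * (exp (-t) * t ^ k / k !) = exp (-t) * ((t * exp c) ^ k / k !) := by
    rw [mul_comm c, exp_nat_mul, mul_pow]
    ring
  simpa only [hterm] using h

namespace MeasureTheory

section PoissonMixture

variable {Ω : Type*} [MeasurableSpace Ω] {μ : Measure Ω}

theorem lintegral_comp_nat {N : Ω → ℕ} (hN : Measurable N) (f : ℕ → ℝ≥0∞) :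
    ∫⁻ ω, f (N ω) ∂μ = ∑' k, f k * μ {ω | N ω = k} := by
  rw [← lintegral_map (measurable_of_countable f) hN, lintegral_countable']
  congr with k
  rw [Measure.map_apply hN (measurableSet_singleton k)]
  rfl

variable {N : Ω → ℕ} {Λ : Ω → ℝ}

theorem lintegral_exp_mul_of_poisson_mixture (hN : Measurable N) (hΛ : Measurable Λ)
    (hΛ0 : 0 ≤ᵐ[μ] Λ)
    (hpmf : ∀ k : ℕ, μ {ω | N ω = k} = ∫⁻ ω, ENNReal.ofReal (exp (-Λ ω) * Λ ω ^ k / k !) ∂μ)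
    (c : ℝ) :
    ∫⁻ ω, ENNReal.ofReal (exp (c * N ω)) ∂μ =
      ∫⁻ ω, ENNReal.ofReal (exp ((exp c - 1) * Λ ω)) ∂μ := by
  calc ∫⁻ ω, ENNReal.ofReal (exp (c * N ω)) ∂μ
      = ∑' k : ℕ, ENNReal.ofReal (exp (c * k)) * μ {ω | N ω = k} :=
        lintegral_comp_nat hN fun k => ENNReal.ofReal (exp (c * k))
    _ = ∑' k : ℕ, ∫⁻ ω, ENNReal.ofReal (exp (c * k) * (exp (-Λ ω) * Λ ω ^ k / k !)) ∂μ := by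
        congr with k
        simp only [hpmf k, ENNReal.ofReal_mul (exp_nonneg _)]
        rw [lintegral_const_mul' _ _ ENNReal.ofReal_ne_top]
    _ = ∫⁻ ω, ∑' k : ℕ, ENNReal.ofReal (exp (c * k) * (exp (-Λ ω) * Λ ω ^ k / k !)) ∂μ :=
        (lintegral_tsum fun k => by fun_prop).symm
    _ = ∫⁻ ω, ENNReal.ofReal (exp ((exp c - 1) * Λ ω)) ∂μ := by
        refine lintegral_congr_ae (hΛ0.mono fun ω hω => ?_)
        have hsum := hasSum_exp_mul_mul_poisson c (Λ ω)
        dsimp only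
        rw [← hsum.tsum_eq, ENNReal.ofReal_tsum_of_nonneg (fun k =>
          mul_nonneg (exp_nonneg _) (by have := pow_nonneg hω k; positivity)) hsum.summable]

theorem integral_exp_mul_of_poisson_mixture (hN : Measurable N) (hΛ : Measurable Λ)
    (hΛ0 : 0 ≤ᵐ[μ] Λ)
    (hpmf : ∀ k : ℕ, μ {ω | N ω = k} = ∫⁻ ω, ENNReal.ofReal (exp (-Λ ω) * Λ ω ^ k / k !) ∂μ)
    (c : ℝ) :
    ∫ ω, exp (c * N ω) ∂μ = ∫ ω, exp ((exp c - 1) * Λ ω) ∂μ := by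
  rw [integral_eq_lintegral_of_nonneg_ae (ae_of_all _ fun _ => exp_nonneg _) (by fun_prop),
    integral_eq_lintegral_of_nonneg_ae (ae_of_all _ fun _ => exp_nonneg _) (by fun_prop),
    lintegral_exp_mul_of_poisson_mixture hN hΛ hΛ0 hpmf]

end PoissonMixture

section CondExp

variable {Ω : Type*} {m m₀ : MeasurableSpace Ω} {μ : Measure[m₀] Ω}

theorem measurable_of_condExp_comap_ae_eq {β E : Type*} [MeasurableSpace β]
    [NormedAddCommGroup E] [NormedSpace ℝ E] {g : Ω → β} {f h : Ω → E}
    (hfh : μ[f | MeasurableSpace.comap g inferInstance] =ᵐ[μ] h) (hh : ¬h =ᵐ[μ] 0) :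
    Measurable g := by
  refine measurable_iff_comap_le.2 (not_not.1 fun hg => hh ?_)
  rw [condExp_of_not_le hg] at hfh
  exact hfh.symm

theorem integral_eq_integral_of_condExp_ae_eq [IsFiniteMeasure μ] (hm : m ≤ m₀) {f g : Ω → ℝ}
    (hfg : μ[f | m] =ᵐ[μ] g) : ∫ ω, f ω ∂μ = ∫ ω, g ω ∂μ :=
  (integral_condExp hm).symm.trans (integral_congr_ae hfg)

theorem measure_eq_lintegral_of_condExp_indicator_ae_eq [IsFiniteMeasure μ] (hm : m ≤ m₀)
    {s : Set Ω} (hs : MeasurableSet s) {g : Ω → ℝ} (hg : μ[s.indicator 1 | m] =ᵐ[μ] g) :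
    μ s = ∫⁻ ω, ENNReal.ofReal (g ω) ∂μ := by
  have hg0 : 0 ≤ᵐ[μ] g :=
    (condExp_nonneg (ae_of_all _ (Set.indicator_nonneg fun _ _ => zero_le_one))).trans_eq hg
  rw [← ofReal_integral_eq_lintegral_ofReal (integrable_condExp.congr hg) hg0,
    ← integral_eq_integral_of_condExp_ae_eq hm hg, integral_indicator_one hs, ofReal_measureReal]

theorem integral_exp_mul_of_condExp_poisson [IsFiniteMeasure μ] (hm : m ≤ m₀) {N : Ω → ℕ}
    {Λ : Ω → ℝ} (hN : Measurable N) (hΛ : Measurable Λ)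
    (hpois : ∀ k : ℕ, μ[{ω | N ω = k}.indicator 1 | m] =ᵐ[μ] fun ω => exp (-Λ ω) * Λ ω ^ k / k !)
    (c : ℝ) :
    ∫ ω, exp (c * N ω) ∂μ = ∫ ω, exp ((exp c - 1) * Λ ω) ∂μ := by
  have hΛ0 : 0 ≤ᵐ[μ] Λ := by
    filter_upwards [(condExp_nonneg (ae_of_all _
      (Set.indicator_nonneg fun _ _ => zero_le_one))).trans_eq (hpois 1)] with ω hω
    simpa [exp_pos, mul_nonneg_iff_of_pos_left] using hω
  exact integral_exp_mul_of_poisson_mixture hN hΛ hΛ0 (fun k =>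
    measure_eq_lintegral_of_condExp_indicator_ae_eq (s := {ω | N ω = k}) hm
      (hN (measurableSet_singleton k)) (hpois k)) c

end CondExp

end MeasureTheory

namespace ProbabilityTheory

section

variable {Ω : Type*} [MeasurableSpace Ω] {μ : Measure Ω}

theorem integral_sq_eq_integral_sub_sq_add_sq [IsProbabilityMeasure μ] {X : Ω → ℝ}
    (hX : MemLp X 2 μ) :
    ∫ ω, X ω ^ 2 ∂μ = ∫ ω, (X ω - ∫ ω', X ω' ∂μ) ^ 2 ∂μ + (∫ ω, X ω ∂μ) ^ 2 := by
  rw [← variance_eq_integral hX.aemeasurable, variance_eq_sub hX]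
  simp

theorem IndepFun.integrable_left_of_integrable_mul_of_pos [NeZero μ] {X Y : Ω → ℝ}
    (hXY : IndepFun X Y μ) (hint : Integrable (fun ω => X ω * Y ω) μ)
    (hX : AEStronglyMeasurable X μ) (hY : AEStronglyMeasurable Y μ) (hYpos : ∀ ω, 0 < Y ω) :
    Integrable X μ :=
  hXY.integrable_left_of_integrable_op (· * ·) (1 : NNReal) one_ne_zero
    (fun x y => by simp [enorm_mul]) hint hX hY
    fun h => (hYpos h.exists.choose).ne' h.exists.choose_spec

end

section

variable {Ω : Type*} {m m₀ : MeasurableSpace Ω} {μ : Measure[m₀] Ω}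

theorem IndepFun.integral_comp_mul_exp_of_condExp_poisson [IsFiniteMeasure μ] (hm : m ≤ m₀)
    {X : Ω → ℝ} {N : Ω → ℕ} {Λ : Ω → ℝ}
    (hXN : IndepFun X N μ) (hX : Measurable X) (hN : Measurable N) (hΛ : Measurable Λ)
    (hpois : ∀ k : ℕ, μ[{ω | N ω = k}.indicator 1 | m] =ᵐ[μ] fun ω => exp (-Λ ω) * Λ ω ^ k / k !)
    {f : ℝ → ℝ} (hf : Measurable f) (c : ℝ) :
    ∫ ω, f (X ω) * exp (c * N ω) ∂μ =
      (∫ ω, f (X ω) ∂μ) * ∫ ω, exp ((exp c - 1) * Λ ω) ∂μ := by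
  rw [hXN.integral_fun_comp_mul_comp (g := fun n : ℕ => exp (c * n)) hX.aemeasurable
    hN.aemeasurable hf.aestronglyMeasurable (by fun_prop),
    integral_exp_mul_of_condExp_poisson hm hN hΛ hpois]

end

end ProbabilityTheory

theorem integral_comp_mul_exp_eq_mul_mgf {Ω : Type*} [MeasurableSpace Ω] {μ : Measure Ω}
    [IsFiniteMeasure μ] {N : Ω → ℕ} {R₁ R₂ : Ω → ℝ} {l₁ : ℝ} (hN : Measurable N)
    (hR₁ : Measurable R₁) (hR₂ : Measurable R₂)
    (hpois : ∀ k : ℕ,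
      μ[fun ω => if N ω = k then (1 : ℝ) else 0 |
          MeasurableSpace.comap (fun ω => (R₁ ω, R₂ ω)) inferInstance] =ᵐ[μ]
        fun ω => exp (-(l₁ * R₁ ω)) * (l₁ * R₁ ω) ^ k / k !)
    (hIndep : IndepFun R₂ (fun ω => (R₁ ω, N ω)) μ) {f : ℝ → ℝ} (hf : Measurable f) (c : ℝ) :
    ∫ ω, f (R₂ ω) * exp (c * N ω) ∂μ =
      (∫ ω, f (R₂ ω) ∂μ) * ∫ ω, exp (l₁ * (exp c - 1) * R₁ ω) ∂μ := by
  have hind (k : ℕ) :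
      {ω | N ω = k}.indicator (1 : Ω → ℝ) = fun ω => if N ω = k then 1 else 0 := by
    ext ω
    simp [Set.indicator_apply]
  have hR₂N : IndepFun R₂ N μ := hIndep.comp measurable_id measurable_snd
  rw [hR₂N.integral_comp_mul_exp_of_condExp_poisson (hR₁.prodMk hR₂).comap_le hR₂ hN
    (by fun_prop) (fun k => hind k ▸ hpois k) hf]
  congr with ω
  ring_nf

theorem crm_covariance_same_period_severities_general
    {Ω : Type*} [MeasurableSpace Ω] (μ : Measure Ω) [IsProbabilityMeasure μ]
    (N : Ω → ℕ) (Y₁ Y₂ : Ω → ℝ) (R₁ R₂ : Ω → ℝ)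
    (l₁ l₂ β₀ b₂ : ℝ) (hl₂ : 0 < l₂)
    (hN : ∀ k : ℕ,
      μ[fun ω => if N ω = k then (1 : ℝ) else 0 |
          MeasurableSpace.comap (fun ω => (R₁ ω, R₂ ω)) inferInstance] =ᵐ[μ]
        fun ω => Real.exp (-(l₁ * R₁ ω)) * (l₁ * R₁ ω) ^ k / (Nat.factorial k))
    (hY₁ : μ[Y₁ | MeasurableSpace.comap (fun ω => (N ω, R₁ ω, R₂ ω)) inferInstance] =ᵐ[μ]
        fun ω => l₂ * R₂ ω * Real.exp (β₀ * N ω))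
    (hY₂ : μ[Y₂ | MeasurableSpace.comap (fun ω => (N ω, R₁ ω, R₂ ω)) inferInstance] =ᵐ[μ]
        fun ω => l₂ * R₂ ω * Real.exp (β₀ * N ω))
    (hCondIndep :
      μ[fun ω => Y₁ ω * Y₂ ω |
          MeasurableSpace.comap (fun ω => (N ω, R₁ ω, R₂ ω)) inferInstance] =ᵐ[μ]
        fun ω =>
          (μ[Y₁ | MeasurableSpace.comap (fun ω' => (N ω', R₁ ω', R₂ ω')) inferInstance]) ω *
          (μ[Y₂ | MeasurableSpace.comap (fun ω' => (N ω', R₁ ω', R₂ ω')) inferInstance]) ω)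
    (hIndep : IndepFun R₂ (fun ω => (R₁ ω, N ω)) μ)
    (hR₂mean : ∫ ω, R₂ ω ∂μ = 1)
    (hR₂var : ∫ ω, (R₂ ω - 1) ^ 2 ∂μ = b₂) :
    (∫ ω, Y₁ ω * Y₂ ω ∂μ) - (∫ ω, Y₁ ω ∂μ) * (∫ ω, Y₂ ω ∂μ) =
      l₂ ^ 2 *
        ((1 + b₂) * (∫ ω, Real.exp (l₁ * (Real.exp (2 * β₀) - 1) * R₁ ω) ∂μ) -
          (∫ ω, Real.exp (l₁ * (Real.exp β₀ - 1) * R₁ ω) ∂μ) ^ 2) := by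
  -- Were `(N, R₁, R₂)` not measurable, `μ[Y₁ | ⋯]` would be the junk value `0`, forcing `R₂ =ᵐ 0`.
  have hmeas : Measurable fun ω => (N ω, R₁ ω, R₂ ω) := by
    refine measurable_of_condExp_comap_ae_eq hY₁ fun h => one_ne_zero (α := ℝ) ?_
    refine hR₂mean ▸ integral_eq_zero_of_ae (h.mono fun ω hω => ?_)
    simpa [hl₂.ne', (exp_pos _).ne'] using hω
  obtain ⟨hNm, hR₁m, hR₂m⟩ : Measurable N ∧ Measurable R₁ ∧ Measurable R₂ :=
    ⟨hmeas.fst, hmeas.snd.fst, hmeas.snd.snd⟩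
  have hmoment {f : ℝ → ℝ} (hf : Measurable f) :=
    integral_comp_mul_exp_eq_mul_mgf hNm hR₁m hR₂m hN hIndep hf
  have hmean {Y : Ω → ℝ}
      (hY : μ[Y | MeasurableSpace.comap (fun ω => (N ω, R₁ ω, R₂ ω)) inferInstance] =ᵐ[μ]
        fun ω => l₂ * R₂ ω * exp (β₀ * N ω)) :
      ∫ ω, Y ω ∂μ = l₂ * ∫ ω, exp (l₁ * (exp β₀ - 1) * R₁ ω) ∂μ := by
    rw [integral_eq_integral_of_condExp_ae_eq hmeas.comap_le hY]
    simp_rw [mul_assoc l₂]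
    rw [integral_const_mul, hmoment (f := fun x => x) measurable_id, hR₂mean, one_mul]
  have hprod : μ[fun ω => Y₁ ω * Y₂ ω |
      MeasurableSpace.comap (fun ω => (N ω, R₁ ω, R₂ ω)) inferInstance] =ᵐ[μ]
      fun ω => l₂ ^ 2 * (R₂ ω ^ 2 * exp (2 * β₀ * N ω)) := by
    filter_upwards [hCondIndep, hY₁, hY₂] with ω h h₁ h₂
    rw [h, h₁, h₂, show 2 * β₀ * N ω = β₀ * N ω + β₀ * N ω by ring, exp_add]
    ring
  have hR₂sq : ∫ ω, R₂ ω ^ 2 ∂μ = 1 + b₂ := by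
    have hindep : IndepFun (fun ω => R₂ ω ^ 2) (fun ω => exp (2 * β₀ * N ω)) μ :=
      hIndep.comp (by fun_prop : Measurable fun x : ℝ => x ^ 2)
        (by fun_prop : Measurable fun p : ℝ × ℕ => exp (2 * β₀ * p.2))
    have hint := (integrable_const_mul_iff (isUnit_iff_ne_zero.2 (by positivity)) _).1
      (integrable_condExp.congr hprod)
    have hL2 := (memLp_two_iff_integrable_sq hR₂m.aestronglyMeasurable).2 <|
      hindep.integrable_left_of_integrable_mul_of_pos hint (by fun_prop) (by fun_prop)
        fun _ => exp_pos _
    rw [integral_sq_eq_integral_sub_sq_add_sq hL2, hR₂mean, hR₂var]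
    ring
  rw [integral_eq_integral_of_condExp_ae_eq hmeas.comap_le hprod, integral_const_mul,
    hmoment (f := fun x => x ^ 2) (by fun_prop), hR₂sq, hmean hY₁, hmean hY₂]
  ring

/-- In the dependent CRM, individual severities in the same period with common conditional
mean `l₂ R₂ e^{β₀ N}` given `(R, N)`, conditionally independent given `(R, N)`, where
`N | R ~ Poisson(l₁ R₁)`, `E[R₂] = 1`, `Var[R₂] = b₂` and `R₂ ⟂ (R₁, N)`, satisfy
`Cov[Y₁, Y₂] = l₂² [(1 + b₂) M(ζ₂) - (M(ζ₁))²]` with `ζ₁ = l₁(e^{β₀}-1)`,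
`ζ₂ = l₁(e^{2β₀}-1)`, `M` the mgf of `R₁`. -/
theorem crm_covariance_same_period_severities
    {Ω : Type*} [MeasurableSpace Ω] (μ : Measure Ω) [IsProbabilityMeasure μ]
    (N : Ω → ℕ) (Y₁ Y₂ : Ω → ℝ) (R₁ R₂ : Ω → ℝ)
    (l₁ l₂ β₀ b₂ : ℝ) (hl₁ : 0 < l₁) (hl₂ : 0 < l₂) (hb₂ : 0 ≤ b₂)
    (hN : ∀ k : ℕ,
      μ[fun ω => if N ω = k then (1 : ℝ) else 0 |
          MeasurableSpace.comap (fun ω => (R₁ ω, R₂ ω)) inferInstance] =ᵐ[μ]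
        fun ω => Real.exp (-(l₁ * R₁ ω)) * (l₁ * R₁ ω) ^ k / (Nat.factorial k))
    (hY₁ : μ[Y₁ | MeasurableSpace.comap (fun ω => (N ω, R₁ ω, R₂ ω)) inferInstance] =ᵐ[μ]
        fun ω => l₂ * R₂ ω * Real.exp (β₀ * N ω))
    (hY₂ : μ[Y₂ | MeasurableSpace.comap (fun ω => (N ω, R₁ ω, R₂ ω)) inferInstance] =ᵐ[μ]
        fun ω => l₂ * R₂ ω * Real.exp (β₀ * N ω))
    (hCondIndep :
      μ[fun ω => Y₁ ω * Y₂ ω |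
          MeasurableSpace.comap (fun ω => (N ω, R₁ ω, R₂ ω)) inferInstance] =ᵐ[μ]
        fun ω =>
          (μ[Y₁ | MeasurableSpace.comap (fun ω' => (N ω', R₁ ω', R₂ ω')) inferInstance]) ω *
          (μ[Y₂ | MeasurableSpace.comap (fun ω' => (N ω', R₁ ω', R₂ ω')) inferInstance]) ω)
    (hIndep : IndepFun R₂ (fun ω => (R₁ ω, N ω)) μ)
    (hR₂mean : ∫ ω, R₂ ω ∂μ = 1)
    (hR₂var : ∫ ω, (R₂ ω - 1) ^ 2 ∂μ = b₂)
    (hY₁int : Integrable Y₁ μ) (hY₂int : Integrable Y₂ μ)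
    (hprodint : Integrable (fun ω => Y₁ ω * Y₂ ω) μ)
    (hM₁ : Integrable (fun ω => Real.exp (l₁ * (Real.exp β₀ - 1) * R₁ ω)) μ)
    (hM₂ : Integrable (fun ω => Real.exp (l₁ * (Real.exp (2 * β₀) - 1) * R₁ ω)) μ) :
    (∫ ω, Y₁ ω * Y₂ ω ∂μ) - (∫ ω, Y₁ ω ∂μ) * (∫ ω, Y₂ ω ∂μ) =
      l₂ ^ 2 *
        ((1 + b₂) * (∫ ω, Real.exp (l₁ * (Real.exp (2 * β₀) - 1) * R₁ ω) ∂μ) -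
          (∫ ω, Real.exp (l₁ * (Real.exp β₀ - 1) * R₁ ω) ∂μ) ^ 2) :=
  crm_covariance_same_period_severities_general μ N Y₁ Y₂ R₁ R₂ l₁ l₂ β₀ b₂ hl₂ hN hY₁ hY₂
    hCondIndep hIndep hR₂mean hR₂var
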